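/- arXiv:2408.04371 — 3 statements merged into one kernel-verified Lean document; each statement's English description precedes it below -/
import Mathlib

section
/- Let (xⁿ)_{n≥0} be a real sequence satisfying the three-term recursion inequality 3x^{n+1} - 4xⁿ + x^{n-1} ≤ g^{n+1} for all n ≥ 1. Then there exist constants c₀ and c₁ depending only on x⁰ and x¹ such that for all N ≥ 2, x^N ≤ c₀ + c₁/3^N + Σ_{j=2}^{N} 3^{-(N+1-j)} Σ_{k=2}^{j} g^k. -/
open Finset

/-!
Writing the left-hand side as `(3x^{n+1} - xⁿ) - (3xⁿ - x^{n-1})`, the recursion says that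
`yⁿ = 3xⁿ - x^{n-1}` increases by at most `g^{n+1}` per step, so `yⁿ ≤ y¹ + Σ_{k=2}^{n} g^k`.
With `c₀ = y¹/2`, the sequence `zⁿ = xⁿ - c₀` then satisfies
`z^{n+1} ≤ zⁿ/3 + (Σ_{k=2}^{n+1} g^k)/3`, and unrolling this first-order recursion gives the bound.
-/

theorem le_pow_mul_add_sum_of_le_mul_add {R : Type*} [Semiring R] [PartialOrder R]
    [IsOrderedRing R] {u b : ℕ → R} {q : R} (hq : 0 ≤ q) {m : ℕ}
    (h : ∀ n, m ≤ n → u (n + 1) ≤ q * u n + b (n + 1)) :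
    ∀ N, m ≤ N → u N ≤ q ^ (N - m) * u m + ∑ j ∈ Ioc m N, q ^ (N - j) * b j := by
  intro N hN
  induction N, hN using Nat.le_induction with
  | base => simp
  | succ N hmN ih =>
    calc u (N + 1) ≤ q * u N + b (N + 1) := h N hmN
      _ ≤ q * (q ^ (N - m) * u m + ∑ j ∈ Ioc m N, q ^ (N - j) * b j) + b (N + 1) := by
        gcongr
      _ = q ^ (N + 1 - m) * u m + ∑ j ∈ Ioc m (N + 1), q ^ (N + 1 - j) * b j := by
        rw [sum_Ioc_succ_top (by omega), Nat.sub_self, pow_zero, one_mul, mul_add, mul_sum,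
          ← mul_assoc, ← pow_succ', Nat.sub_add_comm hmN, add_assoc]
        congr 2
        refine sum_congr rfl fun j hj => ?_
        rw [← mul_assoc, ← pow_succ', Nat.sub_add_comm (mem_Ioc.mp hj).2]

theorem one_third_pow_sub_mul_div_three {j N : ℕ} (hj : j ≤ N) (a : ℝ) :
    (1 / 3 : ℝ) ^ (N - j) * (a / 3) = 1 / 3 ^ (N + 1 - j) * a := by
  rw [Nat.sub_add_comm hj, one_div_pow, pow_succ]
  field_simp

/-- Guermond–Salgado three-term recursion lemma: if
`3x^{n+1} - 4xⁿ + x^{n-1} ≤ g^{n+1}` for all `n ≥ 1`, then there exist constants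
`c₀, c₁` (depending only on `x⁰` and `x¹`) such that for all `N ≥ 2`,
`x^N ≤ c₀ + c₁/3^N + Σ_{j=2}^{N} 3^{-(N+1-j)} Σ_{k=2}^{j} g^k`. -/
theorem three_term_recursion (x g : ℕ → ℝ)
    (h : ∀ n : ℕ, 1 ≤ n → 3 * x (n + 1) - 4 * x n + x (n - 1) ≤ g (n + 1)) :
    ∃ c₀ c₁ : ℝ, ∀ N : ℕ, 2 ≤ N →
      x N ≤ c₀ + c₁ / 3 ^ N
        + ∑ j ∈ Finset.Icc 2 N, (1 / 3 ^ (N + 1 - j)) * ∑ k ∈ Finset.Icc 2 j, g k := by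
  have hy : ∀ n, 1 ≤ n → 3 * x n - x (n - 1) ≤ 3 * x 1 - x 0 + ∑ k ∈ Icc 2 n, g k := by
    intro n hn
    simpa [← Icc_add_one_left_eq_Ioc] using
      le_pow_mul_add_sum_of_le_mul_add (u := fun n => 3 * x n - x (n - 1)) zero_le_one
        (fun n hn => by simp only [Nat.add_sub_cancel, one_mul]; linarith [h n hn]) n hn
  set c₀ := (3 * x 1 - x 0) / 2 with hc₀
  have hz := le_pow_mul_add_sum_of_le_mul_add (u := fun n => x n - c₀)
    (b := fun n => (∑ k ∈ Icc 2 n, g k) / 3) (q := 1 / 3) (by norm_num) (m := 1)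
    fun n hn => by
      have hyn := hy (n + 1) (by omega)
      rw [Nat.add_sub_cancel] at hyn
      linarith
  refine ⟨c₀, 3 * (x 1 - c₀), fun N hN => ?_⟩
  have hzN := hz N (by omega)
  rw [← Icc_add_one_left_eq_Ioc, one_add_one_eq_two] at hzN
  rw [← mul_div_cancel_left₀ (x 1 - c₀) (three_ne_zero' ℝ),
    one_third_pow_sub_mul_div_three (by omega), Nat.add_sub_cancel,
    sum_congr rfl fun j hj => one_third_pow_sub_mul_div_three (mem_Icc.mp hj).2 _,
    one_div_mul_eq_div] at hzN
  linarith
end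

section
/- Let (xⁿ)_{n≥0} satisfy 3x^{n+1} - 4xⁿ + x^{n-1} ≤ -(b^{n+1} + d^{n+1} - dⁿ) for n ≥ 2, where bⁿ, dⁿ ≥ 0. Then there exists a constant c > 0 depending only on x¹, x², d² such that for all N ≥ 3: x^N + (1/3)Σ_{k=3}^{N} b^k + (1/3)d^N ≤ c(x¹ + x² + d²). -/
/-!
Writing `3xⁿ⁺¹ - 4xⁿ + xⁿ⁻¹ = (3xⁿ⁺¹ - xⁿ) - (3xⁿ - xⁿ⁻¹)`, the hypothesis says that the energy
`Eⁿ = 3xⁿ - xⁿ⁻¹ + dⁿ` decreases by at least `bⁿ⁺¹` at each step, so telescoping gives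
`Eᴺ + Σ_{k=3}^N bᵏ ≤ E²`. Dropping the nonnegative terms leaves `3xᴺ ≤ xᴺ⁻¹ + E²`, a contracting
recursion that keeps `xᴺ` below `max x² (E²/2)`.
-/

open Finset

theorem add_sum_Ioc_le_of_succ_add_le {E b : ℕ → ℝ} {m : ℕ}
    (hE : ∀ n ≥ m, E (n + 1) + b (n + 1) ≤ E n) {N : ℕ} (hN : m ≤ N) :
    E N + ∑ k ∈ Ioc m N, b k ≤ E m := by
  induction N, hN using Nat.le_induction with
  | base => simp
  | succ n hmn ih =>
    rw [sum_Ioc_succ_top hmn]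
    linarith [hE n hmn]

theorem le_max_of_mul_succ_le_add {a C : ℝ} (ha : 1 < a) {y : ℕ → ℝ} {m : ℕ}
    (hy : ∀ n ≥ m, a * y (n + 1) ≤ y n + C) {N : ℕ} (hN : m ≤ N) :
    y N ≤ max (y m) (C / (a - 1)) := by
  induction N, hN using Nat.le_induction with
  | base => exact le_max_left _ _
  | succ n hmn ih =>
    set M := max (y m) (C / (a - 1))
    have hCM : C ≤ (a - 1) * M := by
      rw [← div_le_iff₀' (by linarith)]
      exact le_max_right _ _
    have : a * y (n + 1) ≤ a * M := by linarith [hy n hmn]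
    exact le_of_mul_le_mul_left this (by linarith)

/-- Application of the three-term recursion lemma: uniform bound on discrete energy
plus cumulative dissipation for the BDF2 artificial-compressibility scheme. -/
theorem three_term_recursion_energy_bound (x b d : ℕ → ℝ)
    (hx : ∀ n, 0 ≤ x n) (hb : ∀ n, 0 ≤ b n) (hd : ∀ n, 0 ≤ d n)
    (h : ∀ n : ℕ, 2 ≤ n →
      3 * x (n + 1) - 4 * x n + x (n - 1) ≤ -(b (n + 1) + d (n + 1) - d n)) :
    ∃ c : ℝ, 0 < c ∧ ∀ N : ℕ, 3 ≤ N →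
      x N + (1 / 3) * ∑ k ∈ Finset.Icc 3 N, b k + (1 / 3) * d N
        ≤ c * (x 1 + x 2 + d 2) := by
  set E : ℕ → ℝ := fun n ↦ 3 * x n - x (n - 1) + d n
  have energy : ∀ N ≥ 2, E N + ∑ k ∈ Icc 3 N, b k ≤ E 2 := fun N hN ↦
    add_sum_Ioc_le_of_succ_add_le (fun n hn ↦ by
      simp only [E, Nat.add_sub_cancel]
      linarith [h n hn]) hN
  have contraction : ∀ n ≥ 2, 3 * x (n + 1) ≤ x n + E 2 := fun n hn ↦ by
    have := energy (n + 1) (by omega)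
    simp only [E, Nat.add_sub_cancel] at this
    linarith [hd (n + 1), sum_nonneg fun k (_ : k ∈ Icc 3 (n + 1)) ↦ hb k]
  refine ⟨2, two_pos, fun N hN ↦ ?_⟩
  have hxN : x (N - 1) ≤ max (x 2) (E 2 / 2) :=
    (le_max_of_mul_succ_le_add (by norm_num) contraction (show 2 ≤ N - 1 by omega)).trans_eq
      (by norm_num)
  have hEN := energy N (by omega)
  simp only [E] at hEN hxN
  rcases max_cases (x 2) ((3 * x 2 - x 1 + d 2) / 2) with ⟨hmax, -⟩ | ⟨hmax, -⟩ <;>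
    linarith [hx 1, hx 2, hd 2]
end

section
/- Let U > 0 and let a₁, a₂, b₁, b₂, c₁, c₂ ≥ 0 with a₂, b₂ not both the zero-interaction degenerate case. Define A₁ = γ₀U + (1/(2U))(c₁ + a₁ + b₁), A₂ = (W/(2U))m, B₁ = e^{t/T} m, B₂ = e^{-t/T}(γ₀ + τ/T) + e^{t/T} a₂', where m is a real number satisfying m² ≤ a₁' a₂' (Cauchy-Schwarz), a₁ ≥ W a₁', b₁ ≥ 0, c₁ ≥ 0, γ₀ > 0, W > 0, τ, T > 0. Then A₂B₁ < A₁B₂, so the 2×2 matrix [[A₁,A₂],[B₁,B₂]] is invertible. -/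
/-!
Cauchy–Schwarz `m² ≤ a₁'a₂'` together with `W a₁' ≤ a₁` bounds the off-diagonal product
`A₂B₁` by the product of the `a₁`-part of `A₁` and the `a₂'`-part of `B₂`; the remaining
positive summands `γ₀U` of `A₁` and `e^{-t/T}(γ₀ + τ/T)` of `B₂` make the comparison with
`A₁B₂` strict.
-/

lemma mul_sq_le_of_sq_le_mul {W m x y a : ℝ} (hW : 0 ≤ W) (hy : 0 ≤ y)
    (hm : m ^ 2 ≤ x * y) (ha : W * x ≤ a) : W * m ^ 2 ≤ a * y :=
  calc W * m ^ 2 ≤ W * (x * y) := mul_le_mul_of_nonneg_left hm hW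
    _ = (W * x) * y := by ring
    _ ≤ a * y := mul_le_mul_of_nonneg_right ha hy

lemma offDiag_mul_lt_diag_mul {α β p q W m x y a : ℝ} (hα : 0 ≤ α) (hβ : 0 ≤ β)
    (hp : 0 < p) (hq : 0 < q) (hW : 0 ≤ W) (hx : 0 ≤ x) (hy : 0 ≤ y)
    (hm : m ^ 2 ≤ x * y) (ha : W * x ≤ a) :
    (α * W * m) * (β * m) < (p + α * a) * (q + β * y) := by
  have ha₀ : 0 ≤ a := (mul_nonneg hW hx).trans ha
  calc (α * W * m) * (β * m) = α * β * (W * m ^ 2) := by ring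
    _ ≤ α * β * (a * y) :=
      mul_le_mul_of_nonneg_left (mul_sq_le_of_sq_le_mul hW hy hm ha) (by positivity)
    _ = (α * a) * (β * y) := by ring
    _ < (p + α * a) * (q + β * y) :=
      mul_lt_mul'' (by linarith) (by linarith) (by positivity) (by positivity)

/-- Abstract unique solvability of the MSAV 2×2 linear system: with
`A₁ = γ₀U + (1/(2U))(c₁ + a₁ + b₁)`, `A₂ = (W/(2U))m`, `B₁ = e^{t/T} m`,
`B₂ = e^{-t/T}(γ₀ + τ/T) + e^{t/T} a₂'`, where `m² ≤ a₁'a₂'` (Cauchy–Schwarz)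
and `a₁ ≥ W a₁'`, one has `A₂B₁ < A₁B₂`. -/
theorem msav_matrix_invertible (U γ₀ W τ T t a₁ b₁ c₁ a₁' a₂' m : ℝ)
    (hU : 0 < U) (hγ : 0 < γ₀) (hW : 0 < W) (hτ : 0 < τ) (hT : 0 < T)
    (ha₁' : 0 ≤ a₁') (ha₂' : 0 ≤ a₂') (hb₁ : 0 ≤ b₁) (hc₁ : 0 ≤ c₁)
    (hm : m ^ 2 ≤ a₁' * a₂') (ha₁ : W * a₁' ≤ a₁) :
    ((W / (2 * U)) * m) * (Real.exp (t / T) * m) <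
      (γ₀ * U + (1 / (2 * U)) * (c₁ + a₁ + b₁)) *
        (Real.exp (-t / T) * (γ₀ + τ / T) + Real.exp (t / T) * a₂') := by
  calc ((W / (2 * U)) * m) * (Real.exp (t / T) * m)
        = ((1 / (2 * U)) * W * m) * (Real.exp (t / T) * m) := by ring
    _ < (γ₀ * U + (1 / (2 * U)) * a₁) *
          (Real.exp (-t / T) * (γ₀ + τ / T) + Real.exp (t / T) * a₂') :=
      offDiag_mul_lt_diag_mul (by positivity) (by positivity) (by positivity) (by positivity)
        hW.le ha₁' ha₂' hm ha₁
    _ ≤ (γ₀ * U + (1 / (2 * U)) * (c₁ + a₁ + b₁)) *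
          (Real.exp (-t / T) * (γ₀ + τ / T) + Real.exp (t / T) * a₂') := by
      gcongr
      linarith
end
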